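/- Let D = (d_1, ..., d_n) be a nonincreasing sequence of positive integers and let i ∈ [1..n] with d_1 < n. Then the sequence D^{⟨i⟩} obtained by laying off d_i (subtracting 1 from the d_i largest integers d_j with j ≠ i and removing d_i) is graphic if and only if D is graphic. -/

import Mathlib

/-!
Attaching to a realization of `D^⟨i⟩` a new vertex adjacent to the first `d_i` vertices
realizes `D`. Conversely, take a realization of `D` and its vertex `w` of degree `d_i`. If `w`
is adjacent to `v` but not to `u`, where `d_v ≤ d_u`, then `u` has a neighbour `t ≠ v` that is
not a neighbour of `v` (`w` is a neighbour of `v` but not of `u`), and switching the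
alternating 4-cycle `w v t u` (swapping edges `wv, ut` for `wu, vt`) keeps all degrees while
moving a neighbour of `w` from `v` to `u`. Since `D` is nonincreasing, repeated switches make
`w` adjacent to exactly the first `d_i` other vertices, and deleting `w` realizes `D^⟨i⟩`.
-/

/-- A finite sequence of natural numbers (possibly containing zeros) is graphic if
it is, up to permutation, the degree sequence of a simple graph on `l.length` vertices.
(Zero entries correspond to isolated vertices, so this also captures graphicness
after removal of zeros.) -/
def IsGraphic (l : List ℕ) : Prop :=
  ∃ G : SimpleGraph (Fin l.length),
    List.Perm (List.ofFn fun v => Nat.card (G.neighborSet v)) l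

open Finset SimpleGraph
open scoped Classical

lemma exists_perm_comp_eq_of_perm_ofFn {α : Type*} [LinearOrder α] {n : ℕ} {f g : Fin n → α}
    (h : (List.ofFn f).Perm (List.ofFn g)) : ∃ σ : Equiv.Perm (Fin n), f ∘ σ = g := by
  refine ⟨(Tuple.sort g).symm.trans (Tuple.sort f), ?_⟩
  have hsorted : f ∘ Tuple.sort f = g ∘ Tuple.sort g :=
    List.ofFn_injective <| List.Perm.eq_of_sortedLE (Tuple.monotone_sort f).sortedLE_ofFn
      (Tuple.monotone_sort g).sortedLE_ofFn
      ((((Tuple.sort f).ofFn_comp_perm f).trans h).trans ((Tuple.sort g).ofFn_comp_perm g).symm)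
  funext v
  simpa using congrFun hsorted ((Tuple.sort g).symm v)

lemma SimpleGraph.card_neighborSet_comap {V W : Type*} (G : SimpleGraph W) (e : V ≃ W) (v : V) :
    Nat.card ((G.comap e).neighborSet v) = Nat.card (G.neighborSet (e v)) :=
  Nat.card_congr (e.subtypeEquiv fun _ => Iff.rfl)

lemma isGraphic_ofFn_iff {n : ℕ} {f : Fin n → ℕ} :
    IsGraphic (List.ofFn f) ↔ ∃ G : SimpleGraph (Fin n), ∀ v, G.degree v = f v := by
  simp only [← card_neighborSet_eq_degree, ← Nat.card_eq_fintype_card]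
  constructor
  · rintro ⟨G, hG⟩
    rw [List.ofFn_congr List.length_ofFn] at hG
    obtain ⟨σ, hσ⟩ := exists_perm_comp_eq_of_perm_ofFn hG
    exact ⟨G.comap (σ.trans (finCongr List.length_ofFn.symm)), fun v =>
      (card_neighborSet_comap _ _ v).trans (congrFun hσ v)⟩
  · rintro ⟨G, hG⟩
    refine ⟨G.comap (finCongr List.length_ofFn), List.Perm.of_eq ?_⟩
    rw [List.ofFn_congr List.length_ofFn]
    congr 1
    funext v
    rw [card_neighborSet_comap, ← hG]
    rfl

namespace SimpleGraph

variable {V : Type*} (G : SimpleGraph V)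

def switch (w u v t : V) : SimpleGraph V :=
  G \ fromEdgeSet {s(w, v), s(u, t)} ⊔ fromEdgeSet {s(w, u), s(v, t)}

variable {G} {w u v t x : V}

lemma switch_adj {x y : V} : (G.switch w u v t).Adj x y ↔
    G.Adj x y ∧ ¬(s(x, y) = s(w, v) ∨ s(x, y) = s(u, t)) ∨
      (s(x, y) = s(w, u) ∨ s(x, y) = s(v, t)) ∧ x ≠ y := by
  simp only [switch, sup_adj, sdiff_adj, fromEdgeSet_adj, Set.mem_insert_iff,
    Set.mem_singleton_iff]
  have := G.ne_of_adj (a := x) (b := y)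
  tauto

lemma switch_swap_wv (w u v t : V) : G.switch w u v t = G.switch v t w u := by
  ext x y
  simp only [switch_adj, Sym2.eq_iff]
  grind

lemma switch_swap_wu (w u v t : V) : G.switch w u v t = G.switch u w t v := by
  ext x y
  simp only [switch_adj, Sym2.eq_iff]
  grind

variable [Fintype V]

lemma neighborFinset_switch_left (hwu : w ≠ u) (hwt : w ≠ t) (hwv : G.Adj w v) :
    (G.switch w u v t).neighborFinset w = insert u ((G.neighborFinset w).erase v) := by
  ext y
  simp only [mem_neighborFinset, mem_insert, mem_erase, switch_adj, Sym2.eq_iff]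
  grind [G.ne_of_adj]

lemma neighborFinset_switch_of_ne (hw : x ≠ w) (hu : x ≠ u) (hv : x ≠ v) (ht : x ≠ t) :
    (G.switch w u v t).neighborFinset x = G.neighborFinset x := by
  ext y
  simp only [mem_neighborFinset, switch_adj, Sym2.eq_iff]
  grind

lemma degree_switch_left (hwu : w ≠ u) (hwt : w ≠ t) (hwv : G.Adj w v)
    (hnwu : ¬ G.Adj w u) : (G.switch w u v t).degree w = G.degree w := by
  rw [← card_neighborFinset_eq_degree, ← card_neighborFinset_eq_degree,
    neighborFinset_switch_left hwu hwt hwv,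
    card_insert_of_notMem (by simp [hnwu]), card_erase_add_one (by simpa using hwv)]

lemma degree_switch (hwu : w ≠ u) (hvt : v ≠ t) (hwv : G.Adj w v) (hut : G.Adj u t)
    (hnwu : ¬ G.Adj w u) (hnvt : ¬ G.Adj v t) (x : V) :
    (G.switch w u v t).degree x = G.degree x := by
  have huv : u ≠ v := by rintro rfl; exact hnwu hwv
  have hwt : w ≠ t := by rintro rfl; exact hnwu hut.symm
  by_cases hxw : x = w
  · subst hxw; exact degree_switch_left hwu hwt hwv hnwu
  by_cases hxv : x = v
  · subst hxv; rw [switch_swap_wv]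
    exact degree_switch_left hvt huv.symm hwv.symm hnvt
  by_cases hxu : x = u
  · subst hxu; rw [switch_swap_wu]
    exact degree_switch_left hwu.symm huv hut (fun h => hnwu h.symm)
  by_cases hxt : x = t
  · subst hxt; rw [switch_swap_wu, switch_swap_wv]
    exact degree_switch_left hvt.symm hwt.symm hut.symm (fun h => hnvt h.symm)
  rw [← card_neighborFinset_eq_degree, ← card_neighborFinset_eq_degree,
    neighborFinset_switch_of_ne hxw hxu hxv hxt]

lemma exists_adj_not_adj (hwu : w ≠ u) (hwv : G.Adj w v) (hnwu : ¬ G.Adj w u)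
    (hdeg : G.degree v ≤ G.degree u) : ∃ t, t ≠ v ∧ G.Adj u t ∧ ¬ G.Adj v t := by
  have hcard : #((G.neighborFinset v).erase u) ≤ #((G.neighborFinset u).erase v) := by
    simp only [card_erase_eq_ite, mem_neighborFinset, card_neighborFinset_eq_degree,
      G.adj_comm v u]
    split_ifs <;> omega
  obtain ⟨t, ht, hnt⟩ : ∃ t ∈ (G.neighborFinset u).erase v,
      t ∉ (G.neighborFinset v).erase u := by
    by_contra! hsub
    have hw : w ∈ (G.neighborFinset v).erase u := by simp [hwu, hwv.symm]
    rw [← eq_of_subset_of_card_le hsub hcard] at hw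
    simp [G.adj_comm u w, hnwu] at hw
  simp only [mem_erase, mem_neighborFinset, not_and'] at ht hnt
  exact ⟨t, ht.1, ht.2, fun hvt => hnt hvt ht.2.ne'⟩

lemma exists_neighborFinset_eq_insert_erase (hwu : w ≠ u) (hwv : G.Adj w v)
    (hnwu : ¬ G.Adj w u) (hdeg : G.degree v ≤ G.degree u) :
    ∃ H : SimpleGraph V, (∀ x, H.degree x = G.degree x) ∧
      H.neighborFinset w = insert u ((G.neighborFinset w).erase v) := by
  obtain ⟨t, htv, hut, hnvt⟩ := exists_adj_not_adj hwu hwv hnwu hdeg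
  have hwt : w ≠ t := by rintro rfl; exact hnwu hut.symm
  exact ⟨G.switch w u v t, degree_switch hwu htv.symm hwv hut hnwu hnvt,
    neighborFinset_switch_left hwu hwt hwv⟩

theorem exists_neighborFinset_eq (G : SimpleGraph V) {S : Finset V} (hwS : w ∉ S)
    (hcard : #S = G.degree w) (hS : ∀ u ∈ S, ∀ v ∉ S, v ≠ w → G.degree v ≤ G.degree u) :
    ∃ H : SimpleGraph V, (∀ x, H.degree x = G.degree x) ∧ H.neighborFinset w = S := by
  by_cases hN : G.neighborFinset w = S
  · exact ⟨G, fun _ => rfl, hN⟩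
  have hcardN : #(G.neighborFinset w) = #S := by rw [card_neighborFinset_eq_degree, hcard]
  obtain ⟨v, hvN, hvS⟩ := not_subset.1 fun h => hN (eq_of_subset_of_card_le h hcardN.ge)
  obtain ⟨u, huS, huN⟩ := not_subset.1 fun h => hN (eq_of_subset_of_card_le h hcardN.le).symm
  rw [mem_neighborFinset] at hvN huN
  obtain ⟨H, hH, hHw⟩ := exists_neighborFinset_eq_insert_erase
    (ne_of_mem_of_not_mem huS hwS).symm hvN huN (hS u huS v hvS hvN.ne')
  obtain ⟨K, hK, hKw⟩ := exists_neighborFinset_eq H hwS (by rw [hH, hcard])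
    (fun a ha b hb hbw => by simpa only [hH] using hS a ha b hb hbw)
  exact ⟨K, fun x => (hK x).trans (hH x), hKw⟩
termination_by #(G.neighborFinset w \ S)
decreasing_by
  rw [hHw, insert_sdiff_of_mem _ huS, erase_sdiff_comm]
  exact card_erase_lt_of_mem (mem_sdiff.2 ⟨by simpa using hvN, hvS⟩)

end SimpleGraph

section LayOff

variable {m : ℕ}

def Fin.firstExcept (w : Fin (m + 1)) (k : ℕ) : Finset (Fin (m + 1)) :=
  ({j | j.1 < k} : Finset (Fin m)).map w.succAboveEmb

namespace Fin

variable {w : Fin (m + 1)} {k : ℕ}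

@[simp]
lemma succAbove_mem_firstExcept {j : Fin m} : w.succAbove j ∈ w.firstExcept k ↔ j.1 < k := by
  simp [firstExcept]

lemma notMem_firstExcept : w ∉ w.firstExcept k := by
  simp [firstExcept, succAbove_ne]

lemma card_firstExcept (hk : k ≤ m) : #(w.firstExcept k) = k := by
  simp [firstExcept, card_filter_val_lt, hk]

lemma le_of_mem_firstExcept {f : Fin (m + 1) → ℕ} (hf : Antitone f) {u v : Fin (m + 1)}
    (hu : u ∈ w.firstExcept k) (hv : v ∉ w.firstExcept k) (hvw : v ≠ w) : f v ≤ f u := by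
  obtain ⟨a, rfl⟩ := exists_succAbove_eq (ne_of_mem_of_not_mem hu notMem_firstExcept)
  obtain ⟨b, rfl⟩ := exists_succAbove_eq hvw
  rw [succAbove_mem_firstExcept] at hu hv
  exact hf ((strictMono_succAbove w).monotone (le_iff_val_le_val.2 (by omega)))

end Fin

namespace SimpleGraph

lemma degree_succAbove {G : SimpleGraph (Fin (m + 1))} {w : Fin (m + 1)}
    {G' : SimpleGraph (Fin m)} (hG' : G.comap w.succAbove = G') (j : Fin m) :
    G.degree (w.succAbove j) = G'.degree j + if G.Adj w (w.succAbove j) then 1 else 0 := by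
  have hN : (G.neighborFinset (w.succAbove j)).erase w =
      (G'.neighborFinset j).map w.succAboveEmb := by
    ext x
    rcases eq_or_ne x w with rfl | hx
    · simp [Fin.succAbove_ne]
    · obtain ⟨y, rfl⟩ := Fin.exists_succAbove_eq hx
      simp [hx, ← hG']
  rw [← card_neighborFinset_eq_degree, ← card_neighborFinset_eq_degree,
    ← card_map w.succAboveEmb, ← hN]
  split_ifs with h
  · rw [card_erase_add_one ((G.mem_neighborFinset _ _).2 h.symm)]
  · rw [erase_eq_of_notMem (by simpa [G.adj_comm] using h), add_zero]

def attachVertex (G : SimpleGraph (Fin m)) (w : Fin (m + 1)) (S : Set (Fin (m + 1))) :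
    SimpleGraph (Fin (m + 1)) :=
  G.map w.succAbove ⊔ fromEdgeSet ((fun x => s(w, x)) '' S)

variable {G : SimpleGraph (Fin m)} {w : Fin (m + 1)} {S : Set (Fin (m + 1))}

lemma comap_succAbove_attachVertex : (G.attachVertex w S).comap w.succAbove = G := by
  ext a b
  simp only [attachVertex, comap_adj, sup_adj, map_adj', fromEdgeSet_adj, Set.mem_image,
    Sym2.eq_iff, ne_eq, Fin.succAbove_right_inj, (Fin.succAbove_ne w _).symm]
  grind [G.ne_of_adj]

lemma attachVertex_adj_left {x : Fin (m + 1)} :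
    (G.attachVertex w S).Adj w x ↔ x ∈ S ∧ x ≠ w := by
  simp only [attachVertex, sup_adj, map_adj', fromEdgeSet_adj, Set.mem_image,
    Sym2.eq_iff, Fin.succAbove_ne]
  grind

lemma neighborFinset_attachVertex {S : Finset (Fin (m + 1))} (hwS : w ∉ S) :
    (G.attachVertex w S).neighborFinset w = S := by
  ext x
  rw [mem_neighborFinset, attachVertex_adj_left]
  exact ⟨And.left, fun hx => ⟨hx, ne_of_mem_of_not_mem hx hwS⟩⟩

end SimpleGraph

def layOff (f : Fin (m + 1) → ℕ) (w : Fin (m + 1)) (j : Fin m) : ℕ :=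
  f (w.succAbove j) - if j.1 < f w then 1 else 0

theorem exists_degree_eq_layOff_iff {f : Fin (m + 1) → ℕ} (hf : Antitone f)
    (hpos : ∀ v, 0 < f v) {w : Fin (m + 1)} (hw : f w ≤ m) :
    (∃ G : SimpleGraph (Fin m), ∀ j, G.degree j = layOff f w j) ↔
      ∃ G : SimpleGraph (Fin (m + 1)), ∀ v, G.degree v = f v := by
  constructor
  · rintro ⟨G, hG⟩
    refine ⟨G.attachVertex w (w.firstExcept (f w)), fun v => ?_⟩
    rcases eq_or_ne v w with rfl | hv
    · rw [← card_neighborFinset_eq_degree, neighborFinset_attachVertex Fin.notMem_firstExcept,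
        Fin.card_firstExcept hw]
    · obtain ⟨j, rfl⟩ := Fin.exists_succAbove_eq hv
      have := hpos (w.succAbove j)
      rw [degree_succAbove comap_succAbove_attachVertex, hG, layOff, attachVertex_adj_left]
      simp only [Finset.mem_coe, Fin.succAbove_mem_firstExcept]
      split_ifs <;> omega
  · rintro ⟨G, hG⟩
    obtain ⟨H, hH, hHw⟩ := G.exists_neighborFinset_eq Fin.notMem_firstExcept
      (by rw [Fin.card_firstExcept hw, hG])
      (fun u hu v hv hvw => by simpa only [hG] using Fin.le_of_mem_firstExcept hf hu hv hvw)
    refine ⟨H.comap w.succAbove, fun j => ?_⟩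
    have := degree_succAbove (G' := H.comap w.succAbove) rfl j
    rw [hH, hG, ← mem_neighborFinset, hHw, Fin.succAbove_mem_firstExcept] at this
    rw [layOff]
    split_ifs at this ⊢ <;> omega

end LayOff

theorem stmt_19_general (n : ℕ) (d : ℕ → ℕ)
    (hpos : ∀ i, 1 ≤ i → i ≤ n → 1 ≤ d i)
    (hmono : ∀ i j, 1 ≤ i → i ≤ j → j ≤ n → d j ≤ d i)
    (h1 : d 1 < n)
    (i : ℕ) (hi1 : 1 ≤ i) (hin : i ≤ n) :
    IsGraphic (List.ofFn fun j : Fin (n - 1) =>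
        (if j.1 + 1 < i then d (j.1 + 1) else d (j.1 + 2)) -
          (if j.1 + 1 ≤ d i then 1 else 0)) ↔
      IsGraphic (List.ofFn fun j : Fin n => d (j.1 + 1)) := by
  obtain ⟨m, rfl⟩ : ∃ m, n = m + 1 := ⟨n - 1, by omega⟩
  set w : Fin (m + 1) := ⟨i - 1, by omega⟩
  set f : Fin (m + 1) → ℕ := fun v => d (v.1 + 1)
  have hfw : f w = d i := congrArg d (by simp only [w]; omega)
  have hlayOff : (fun j : Fin (m + 1 - 1) =>
      (if j.1 + 1 < i then d (j.1 + 1) else d (j.1 + 2)) -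
        (if j.1 + 1 ≤ d i then 1 else 0)) = layOff f w := by
    funext j
    rw [layOff, hfw]
    simp only [f, w, Fin.succAbove, Fin.lt_def, Fin.val_castSucc]
    split_ifs <;> first | rfl | omega
  have hdi : d i ≤ m := by have := hmono 1 i le_rfl hi1 hin; omega
  rw [hlayOff, isGraphic_ofFn_iff, isGraphic_ofFn_iff]
  exact exists_degree_eq_layOff_iff
    (fun a b hab => hmono _ _ (by omega) (by simpa using hab) (by omega))
    (fun v => hpos _ (by omega) (by omega)) (hfw.trans_le hdi)

/-- Kleitman–Wang theorem: for a nonincreasing sequence `D` of positive integers with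
`d 1 < n` and `i ∈ [1..n]`, the sequence `D^⟨i⟩` obtained by laying off `d i`
(removing `d i` and subtracting `1` from the `d i` leftmost, i.e. largest, remaining
entries) is graphic iff `D` is graphic. The remaining entries, in order, are
`j ↦ d j` for `j < i` and `j ↦ d (j+1)` for `j ≥ i`. -/
theorem stmt_19 (n : ℕ) (d : ℕ → ℕ) (hn : 1 ≤ n)
    (hpos : ∀ i, 1 ≤ i → i ≤ n → 1 ≤ d i)
    (hmono : ∀ i j, 1 ≤ i → i ≤ j → j ≤ n → d j ≤ d i)
    (h1 : d 1 < n)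
    (i : ℕ) (hi1 : 1 ≤ i) (hin : i ≤ n) :
    IsGraphic (List.ofFn fun j : Fin (n - 1) =>
        (if j.1 + 1 < i then d (j.1 + 1) else d (j.1 + 2)) -
          (if j.1 + 1 ≤ d i then 1 else 0)) ↔
      IsGraphic (List.ofFn fun j : Fin n => d (j.1 + 1)) :=
  stmt_19_general n d hpos hmono h1 i hi1 hin
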